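/- With notation as in the context, if a = 0, b = 0 and c² + k̃ = 0, then the (0,6)-tensors satisfy the identity R·C − C·R = −(2(n−3)μ²/((n−1)(n−2)))·Q(g,R). (This is the displayed identity in the theorem on Wintgen ideal submanifolds whose tensors R·C − C·R and Q(g,R) are linearly dependent, in the minimal/pseudo-umbilical case.) -/
import Mathlib


noncomputable section

namespace Wintgen

/-- The standard inner product `g` on `ℝ^n`. -/
def gg (n : ℕ) (x y : Fin n → ℝ) : ℝ := ∑ i, x i * y i

/-- The standard orthonormal basis vectors `E_i` (0-indexed). -/
def E (n : ℕ) (i : Fin n) : Fin n → ℝ := fun j => if j = i then 1 else 0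

/-- Auxiliary: the `j`-th coordinate of `x` (0 if out of range). -/
def coord (n : ℕ) (x : Fin n → ℝ) (j : ℕ) : ℝ := if h : j < n then x ⟨j, h⟩ else 0

/-- The Choi–Lu shape operator `A_1`. -/
def A1 (n : ℕ) (a μ : ℝ) (x : Fin n → ℝ) : Fin n → ℝ := fun i =>
  if (i : ℕ) = 0 then a * x i + μ * coord n x 1
  else if (i : ℕ) = 1 then μ * coord n x 0 + a * x i
  else a * x i

/-- The Choi–Lu shape operator `A_2`. -/
def A2 (n : ℕ) (b μ : ℝ) (x : Fin n → ℝ) : Fin n → ℝ := fun i =>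
  if (i : ℕ) = 0 then (b + μ) * x i
  else if (i : ℕ) = 1 then (b - μ) * x i
  else b * x i

/-- The Choi–Lu shape operator `A_3 = c • id`. -/
def A3 (n : ℕ) (c : ℝ) (x : Fin n → ℝ) : Fin n → ℝ := fun i => c * x i

/-- The Gauss-equation curvature tensor `R`. -/
def Rt (n : ℕ) (a b c μ k : ℝ) (X Y Z W : Fin n → ℝ) : ℝ :=
  (gg n (A1 n a μ X) W * gg n (A1 n a μ Y) Z - gg n (A1 n a μ X) Z * gg n (A1 n a μ Y) W)
  + (gg n (A2 n b μ X) W * gg n (A2 n b μ Y) Z - gg n (A2 n b μ X) Z * gg n (A2 n b μ Y) W)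
  + (gg n (A3 n c X) W * gg n (A3 n c Y) Z - gg n (A3 n c X) Z * gg n (A3 n c Y) W)
  + k * (gg n X W * gg n Y Z - gg n X Z * gg n Y W)

/-- The Ricci tensor `Ricc(X,Y) = ∑ i, R(E_i, X, Y, E_i)`. -/
def Ricc (n : ℕ) (a b c μ k : ℝ) (X Y : Fin n → ℝ) : ℝ :=
  ∑ i, Rt n a b c μ k (E n i) X Y (E n i)

/-- The scalar curvature `τ`. -/
def tau (n : ℕ) (a b c μ k : ℝ) : ℝ := ∑ i, Ricc n a b c μ k (E n i) (E n i)

/-- The Kulkarni–Nomizu product of two bilinear forms. -/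
def KN (n : ℕ) (A B : (Fin n → ℝ) → (Fin n → ℝ) → ℝ) (X1 X2 X3 X4 : Fin n → ℝ) : ℝ :=
  A X1 X4 * B X2 X3 + A X2 X3 * B X1 X4 - A X1 X3 * B X2 X4 - A X2 X4 * B X1 X3

/-- The Weyl conformal curvature tensor `C`. -/
def Ct (n : ℕ) (a b c μ k : ℝ) (X Y Z W : Fin n → ℝ) : ℝ :=
  Rt n a b c μ k X Y Z W
    - (1 / ((n : ℝ) - 2)) * KN n (gg n) (Ricc n a b c μ k) X Y Z W
    + (tau n a b c μ k / (2 * ((n : ℝ) - 1) * ((n : ℝ) - 2))) * KN n (gg n) (gg n) X Y Z W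

/-- The endomorphism `(X ∧_A Y)` applied to `Z`. -/
def wedge (n : ℕ) (A : (Fin n → ℝ) → (Fin n → ℝ) → ℝ) (X Y Z : Fin n → ℝ) : Fin n → ℝ :=
  fun j => A Y Z * X j - A X Z * Y j

/-- The endomorphism determined by `g(Op(X,Y)Z, W) = T(X,Y,Z,W)`:
its `j`-th component is `T(X,Y,Z,E_j)`. -/
def curvOp (n : ℕ) (T : (Fin n → ℝ) → (Fin n → ℝ) → (Fin n → ℝ) → (Fin n → ℝ) → ℝ)
    (X Y Z : Fin n → ℝ) : Fin n → ℝ := fun j => T X Y Z (E n j)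

/-- Derivation-type action of a family of operators on a (0,4)-tensor. -/
def dotT (n : ℕ) (Op : (Fin n → ℝ) → (Fin n → ℝ) → (Fin n → ℝ) → (Fin n → ℝ))
    (T : (Fin n → ℝ) → (Fin n → ℝ) → (Fin n → ℝ) → (Fin n → ℝ) → ℝ)
    (X1 X2 X3 X4 X Y : Fin n → ℝ) : ℝ :=
  - T (Op X Y X1) X2 X3 X4 - T X1 (Op X Y X2) X3 X4
  - T X1 X2 (Op X Y X3) X4 - T X1 X2 X3 (Op X Y X4)

/-- The (0,6)-tensor `R · C`. -/
def RC (n : ℕ) (a b c μ k : ℝ) :=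
  dotT n (fun X Y => curvOp n (Rt n a b c μ k) X Y) (Ct n a b c μ k)

/-- The (0,6)-tensor `C · R`. -/
def CR (n : ℕ) (a b c μ k : ℝ) :=
  dotT n (fun X Y => curvOp n (Ct n a b c μ k) X Y) (Rt n a b c μ k)

/-- The Tachibana tensor `Q(A, T)`. -/
def Q (n : ℕ) (A : (Fin n → ℝ) → (Fin n → ℝ) → ℝ)
    (T : (Fin n → ℝ) → (Fin n → ℝ) → (Fin n → ℝ) → (Fin n → ℝ) → ℝ) :=
  dotT n (fun X Y => wedge n A X Y) T

/- ===== auxiliary lemmas ===== -/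

lemma coordl (n : ℕ) (X : Fin n → ℝ) (m : ℕ) (hm : m < n) : coord n X m = X ⟨m, hm⟩ :=
  dif_pos hm

lemma coord_eq (n : ℕ) (X : Fin n → ℝ) (j : Fin n) (m : ℕ) (h : (j : ℕ) = m) :
    coord n X m = X j := by
  subst h; simp [coord, Fin.eta, j.isLt]

lemma coord_E (n : ℕ) (i : Fin n) (m : ℕ) (hm : m < n) :
    coord n (E n i) m = if (i : ℕ) = m then 1 else 0 := by
  rw [coordl n _ m hm]; unfold E
  by_cases h : (i : ℕ) = m
  · rw [if_pos (Fin.ext h.symm), if_pos h]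
  · rw [if_neg (fun hh => h (congrArg Fin.val hh).symm), if_neg h]

lemma gg_comm (n : ℕ) (X Y : Fin n → ℝ) : gg n X Y = gg n Y X :=
  Finset.sum_congr rfl fun i _ => mul_comm _ _

lemma sum_ite_val (n : ℕ) (m : ℕ) (hm : m < n) (f : Fin n → ℝ) :
    ∑ j : Fin n, (if (j : ℕ) = m then f j else 0) = f ⟨m, hm⟩ := by
  have h : ∀ j : Fin n, (if (j : ℕ) = m then f j else 0) = if j = ⟨m, hm⟩ then f j else 0 := by
    intro j
    by_cases hj : (j : ℕ) = m
    · rw [if_pos hj, if_pos (Fin.ext hj)]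
    · rw [if_neg hj, if_neg (fun hh => hj (congrArg Fin.val hh))]
  simp_rw [h]; simp [Finset.sum_ite_eq']

lemma sum_two (n : ℕ) (hn : 2 ≤ n) (f : Fin n → ℝ) (r s : ℝ)
    (h : ∀ j : Fin n, f j = (if (j : ℕ) = 0 then r else 0) + (if (j : ℕ) = 1 then s else 0)) :
    ∑ j, f j = r + s := by
  simp_rw [h]
  rw [Finset.sum_add_distrib, sum_ite_val n 0 (by omega) (fun _ => r),
    sum_ite_val n 1 (by omega) (fun _ => s)]

/-- `P(X,Y) = x₀y₁ − x₁y₀`. -/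
def Pf (n : ℕ) (X Y : Fin n → ℝ) : ℝ :=
  coord n X 0 * coord n Y 1 - coord n X 1 * coord n Y 0

/-- `h(X,Y) = x₀y₀ + x₁y₁`. -/
def hf (n : ℕ) (X Y : Fin n → ℝ) : ℝ :=
  coord n X 0 * coord n Y 0 + coord n X 1 * coord n Y 1

lemma gg_Er (n : ℕ) (m : ℕ) (hm : m < n) (X : Fin n → ℝ) :
    gg n X (E n ⟨m, hm⟩) = coord n X m := by
  rw [coordl n X m hm]
  unfold gg E
  simp [Finset.sum_ite_eq']

lemma Pf_E0 (n : ℕ) (hn : 2 ≤ n) (h0 : 0 < n) (X : Fin n → ℝ) :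
    Pf n X (E n ⟨0, h0⟩) = -coord n X 1 := by
  unfold Pf
  rw [coord_E n _ 0 h0, coord_E n _ 1 (by omega)]
  norm_num

lemma Pf_E1 (n : ℕ) (h1 : 1 < n) (X : Fin n → ℝ) :
    Pf n X (E n ⟨1, h1⟩) = coord n X 0 := by
  unfold Pf
  rw [coord_E n _ 0 (by omega), coord_E n _ 1 h1]
  norm_num

lemma hf_E0 (n : ℕ) (hn : 2 ≤ n) (h0 : 0 < n) (X : Fin n → ℝ) :
    hf n X (E n ⟨0, h0⟩) = coord n X 0 := by
  unfold hf
  rw [coord_E n _ 0 h0, coord_E n _ 1 (by omega)]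
  norm_num

lemma hf_E1 (n : ℕ) (h1 : 1 < n) (X : Fin n → ℝ) :
    hf n X (E n ⟨1, h1⟩) = coord n X 1 := by
  unfold hf
  rw [coord_E n _ 0 (by omega), coord_E n _ 1 h1]
  norm_num

lemma gg_A1 {n : ℕ} (hn : 2 ≤ n) (μ : ℝ) (X W : Fin n → ℝ) :
    gg n (A1 n 0 μ X) W = μ * (coord n X 1 * coord n W 0 + coord n X 0 * coord n W 1) := by
  unfold gg
  refine (sum_two n hn _ (μ * coord n X 1 * coord n W 0) (μ * coord n X 0 * coord n W 1)
    ?_).trans (by ring)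
  intro j
  unfold A1
  by_cases h0 : (j : ℕ) = 0
  · rw [if_pos h0, if_pos h0, if_neg (by omega), coord_eq n W j 0 h0]; ring
  · by_cases h1 : (j : ℕ) = 1
    · rw [if_neg h0, if_neg h0, if_pos h1, if_pos h1, coord_eq n W j 1 h1]; ring
    · rw [if_neg h0, if_neg h0, if_neg h1, if_neg h1]; ring

lemma gg_A2 {n : ℕ} (hn : 2 ≤ n) (μ : ℝ) (X W : Fin n → ℝ) :
    gg n (A2 n 0 μ X) W = μ * (coord n X 0 * coord n W 0 - coord n X 1 * coord n W 1) := by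
  unfold gg
  refine (sum_two n hn _ (μ * coord n X 0 * coord n W 0) (-(μ * coord n X 1 * coord n W 1))
    ?_).trans (by ring)
  intro j
  unfold A2
  by_cases h0 : (j : ℕ) = 0
  · rw [if_pos h0, if_pos h0, if_neg (by omega), coord_eq n W j 0 h0, coord_eq n X j 0 h0]; ring
  · by_cases h1 : (j : ℕ) = 1
    · rw [if_neg h0, if_neg h0, if_pos h1, if_pos h1, coord_eq n W j 1 h1,
        coord_eq n X j 1 h1]; ring
    · rw [if_neg h0, if_neg h0, if_neg h1, if_neg h1]; ring

lemma gg_A3 {n : ℕ} (c : ℝ) (X W : Fin n → ℝ) : gg n (A3 n c X) W = c * gg n X W := by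
  unfold gg A3
  rw [Finset.mul_sum]
  exact Finset.sum_congr rfl fun i _ => by ring

lemma Rt_eq {n : ℕ} (hn : 2 ≤ n) (c μ k : ℝ) (hk : c ^ 2 + k = 0) (X Y Z W : Fin n → ℝ) :
    Rt n 0 0 c μ k X Y Z W = 2 * μ ^ 2 * Pf n X Y * Pf n Z W := by
  have hk' : k = -c ^ 2 := by linarith
  unfold Rt Pf
  rw [gg_A1 hn, gg_A1 hn, gg_A1 hn, gg_A1 hn, gg_A2 hn, gg_A2 hn, gg_A2 hn, gg_A2 hn,
    gg_A3, gg_A3, gg_A3, gg_A3, hk']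
  ring

lemma Ricc_eq {n : ℕ} (hn : 2 ≤ n) (c μ k : ℝ) (hk : c ^ 2 + k = 0) (X Y : Fin n → ℝ) :
    Ricc n 0 0 c μ k X Y = -2 * μ ^ 2 * hf n X Y := by
  unfold Ricc
  simp only [Rt_eq hn c μ k hk]
  refine (sum_two n hn _ (-2 * μ ^ 2 * (coord n X 1 * coord n Y 1))
    (-2 * μ ^ 2 * (coord n X 0 * coord n Y 0)) ?_).trans (by unfold hf; ring)
  intro i
  unfold Pf
  rw [coord_E n i 0 (by omega), coord_E n i 1 (by omega)]
  by_cases h0 : (i : ℕ) = 0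
  · simp only [if_pos h0, if_neg (show ¬(i : ℕ) = 1 by omega)]; ring
  · by_cases h1 : (i : ℕ) = 1
    · simp only [if_neg h0, if_pos h1]; ring
    · simp only [if_neg h0, if_neg h1]; ring

lemma tau_eq {n : ℕ} (hn : 2 ≤ n) (c μ k : ℝ) (hk : c ^ 2 + k = 0) :
    tau n 0 0 c μ k = -4 * μ ^ 2 := by
  unfold tau
  simp only [Ricc_eq hn c μ k hk]
  refine (sum_two n hn _ (-2 * μ ^ 2) (-2 * μ ^ 2) ?_).trans (by ring)
  intro i
  unfold hf
  rw [coord_E n i 0 (by omega), coord_E n i 1 (by omega)]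
  by_cases h0 : (i : ℕ) = 0
  · simp only [if_pos h0, if_neg (show ¬(i : ℕ) = 1 by omega)]; ring
  · by_cases h1 : (i : ℕ) = 1
    · simp only [if_neg h0, if_pos h1]; ring
    · simp only [if_neg h0, if_neg h1]; ring

lemma Ct_eq {n : ℕ} (hn : 4 ≤ n) (c μ k : ℝ) (hk : c ^ 2 + k = 0) (X Y Z W : Fin n → ℝ) :
    Ct n 0 0 c μ k X Y Z W = 2 * μ ^ 2 * Pf n X Y * Pf n Z W
      + (2 * μ ^ 2 / ((n : ℝ) - 2)) *
        (gg n X W * hf n Y Z + gg n Y Z * hf n X W - gg n X Z * hf n Y W - gg n Y W * hf n X Z)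
      - (2 * μ ^ 2 / (((n : ℝ) - 1) * ((n : ℝ) - 2))) *
        (gg n X W * gg n Y Z + gg n Y Z * gg n X W - gg n X Z * gg n Y W
          - gg n Y W * gg n X Z) := by
  have h4 : (4 : ℝ) ≤ (n : ℝ) := by exact_mod_cast hn
  have h1 : ((n : ℝ) - 1) ≠ 0 := by linarith
  have h2 : ((n : ℝ) - 2) ≠ 0 := by linarith
  unfold Ct KN
  rw [Rt_eq (by omega) c μ k hk, tau_eq (by omega) c μ k hk]
  simp only [Ricc_eq (show 2 ≤ n by omega) c μ k hk]
  field_simp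
  ring

lemma gg_OpR {n : ℕ} (hn : 2 ≤ n) (c μ k : ℝ) (hk : c ^ 2 + k = 0) (X Y Z W : Fin n → ℝ) :
    gg n (curvOp n (Rt n 0 0 c μ k) X Y Z) W = 2 * μ ^ 2 * Pf n X Y * Pf n Z W := by
  unfold gg
  refine (sum_two n hn _ (-(2 * μ ^ 2) * Pf n X Y * coord n Z 1 * coord n W 0)
    (2 * μ ^ 2 * Pf n X Y * coord n Z 0 * coord n W 1) ?_).trans (by unfold Pf; ring)
  intro j
  simp only [curvOp]
  rw [Rt_eq hn c μ k hk, Pf, Pf, coord_E n j 0 (by omega), coord_E n j 1 (by omega)]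
  by_cases h0 : (j : ℕ) = 0
  · simp only [if_pos h0, if_neg (show ¬(j : ℕ) = 1 by omega)]
    rw [coord_eq n W j 0 h0]; ring
  · by_cases h1 : (j : ℕ) = 1
    · simp only [if_neg h0, if_pos h1]
      rw [coord_eq n W j 1 h1]; ring
    · simp only [if_neg h0, if_neg h1]; ring

lemma gg_OpR' {n : ℕ} (hn : 2 ≤ n) (c μ k : ℝ) (hk : c ^ 2 + k = 0) (X Y Z W : Fin n → ℝ) :
    gg n W (curvOp n (Rt n 0 0 c μ k) X Y Z) = 2 * μ ^ 2 * Pf n X Y * Pf n Z W := by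
  rw [gg_comm]; exact gg_OpR hn c μ k hk X Y Z W

lemma coord_OpR0 {n : ℕ} (hn : 2 ≤ n) (c μ k : ℝ) (hk : c ^ 2 + k = 0) (X Y Z : Fin n → ℝ) :
    coord n (curvOp n (Rt n 0 0 c μ k) X Y Z) 0 = -(2 * μ ^ 2) * Pf n X Y * coord n Z 1 := by
  rw [coordl n _ 0 (by omega)]
  simp only [curvOp]
  rw [Rt_eq hn c μ k hk, Pf_E0 n (by omega) (by omega)]
  ring

lemma coord_OpR1 {n : ℕ} (hn : 2 ≤ n) (c μ k : ℝ) (hk : c ^ 2 + k = 0) (X Y Z : Fin n → ℝ) :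
    coord n (curvOp n (Rt n 0 0 c μ k) X Y Z) 1 = 2 * μ ^ 2 * Pf n X Y * coord n Z 0 := by
  rw [coordl n _ 1 (by omega)]
  simp only [curvOp]
  rw [Rt_eq hn c μ k hk, Pf_E1 n (by omega)]

lemma coord_OpC0 {n : ℕ} (hn : 4 ≤ n) (c μ k : ℝ) (hk : c ^ 2 + k = 0) (X Y Z : Fin n → ℝ) :
    coord n (curvOp n (Ct n 0 0 c μ k) X Y Z) 0
      = -(2 * μ ^ 2) * Pf n X Y * coord n Z 1
        + (2 * μ ^ 2 / ((n : ℝ) - 2)) *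
          (coord n X 0 * hf n Y Z + gg n Y Z * coord n X 0
            - gg n X Z * coord n Y 0 - coord n Y 0 * hf n X Z)
        - (2 * μ ^ 2 / (((n : ℝ) - 1) * ((n : ℝ) - 2))) *
          (coord n X 0 * gg n Y Z + gg n Y Z * coord n X 0
            - gg n X Z * coord n Y 0 - coord n Y 0 * gg n X Z) := by
  rw [coordl n _ 0 (by omega)]
  simp only [curvOp]
  rw [Ct_eq hn c μ k hk, Pf_E0 n (by omega) (by omega), gg_Er n 0 (by omega), gg_Er n 0 (by omega),
    hf_E0 n (by omega) (by omega), hf_E0 n (by omega) (by omega)]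
  ring

lemma coord_OpC1 {n : ℕ} (hn : 4 ≤ n) (c μ k : ℝ) (hk : c ^ 2 + k = 0) (X Y Z : Fin n → ℝ) :
    coord n (curvOp n (Ct n 0 0 c μ k) X Y Z) 1
      = 2 * μ ^ 2 * Pf n X Y * coord n Z 0
        + (2 * μ ^ 2 / ((n : ℝ) - 2)) *
          (coord n X 1 * hf n Y Z + gg n Y Z * coord n X 1
            - gg n X Z * coord n Y 1 - coord n Y 1 * hf n X Z)
        - (2 * μ ^ 2 / (((n : ℝ) - 1) * ((n : ℝ) - 2))) *
          (coord n X 1 * gg n Y Z + gg n Y Z * coord n X 1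
            - gg n X Z * coord n Y 1 - coord n Y 1 * gg n X Z) := by
  rw [coordl n _ 1 (by omega)]
  simp only [curvOp]
  rw [Ct_eq hn c μ k hk, Pf_E1 n (by omega), gg_Er n 1 (by omega), gg_Er n 1 (by omega),
    hf_E1 n (by omega), hf_E1 n (by omega)]

lemma coord_wedge {n : ℕ} (A : (Fin n → ℝ) → (Fin n → ℝ) → ℝ) (X Y Z : Fin n → ℝ) (m : ℕ) :
    coord n (wedge n A X Y Z) m = A Y Z * coord n X m - A X Z * coord n Y m := by
  unfold coord wedge
  by_cases h : m < n
  · simp [h]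
  · simp [h]

set_option maxHeartbeats 4000000 in
/-- if `a = 0`, `b = 0` and `c² + k̃ = 0` then
`R·C − C·R = −(2(n−3)μ²/((n−1)(n−2))) Q(g,R)`. -/
theorem statement_10 (n : ℕ) (hn : 4 ≤ n) (a b c μ k : ℝ)
    (ha : a = 0) (hb : b = 0) (hc : c ^ 2 + k = 0) :
    ∀ X1 X2 X3 X4 X Y : Fin n → ℝ,
      RC n a b c μ k X1 X2 X3 X4 X Y - CR n a b c μ k X1 X2 X3 X4 X Y
        = -(2 * ((n : ℝ) - 3) * μ ^ 2 / (((n : ℝ) - 1) * ((n : ℝ) - 2)))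
            * Q n (gg n) (Rt n a b c μ k) X1 X2 X3 X4 X Y := by
  subst ha hb
  intro X1 X2 X3 X4 X Y
  have h4 : (4 : ℝ) ≤ (n : ℝ) := by exact_mod_cast hn
  have h1 : ((n : ℝ) - 1) ≠ 0 := by linarith
  have h2 : ((n : ℝ) - 2) ≠ 0 := by linarith
  have h2n : 2 ≤ n := by omega
  simp only [RC, CR, Q, dotT]
  simp only [Ct_eq hn c μ k hc, Rt_eq h2n c μ k hc]
  simp only [gg_OpR h2n c μ k hc, gg_OpR' h2n c μ k hc, Pf, hf]
  simp only [coord_OpR0 h2n c μ k hc, coord_OpR1 h2n c μ k hc,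
    coord_OpC0 hn c μ k hc, coord_OpC1 hn c μ k hc, coord_wedge]
  simp only [Pf, hf]
  field_simp
  ring

end Wintgen
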